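/- arXiv:1111.3812 — 2 statements merged into one kernel-verified Lean document; each statement's English description precedes it below -/
import Mathlib

section
/- For every r∈(0,1), ψ(r²) · ψ(((1−r)/(1+r))²) = 1. -/
open Real Set Filter Topology

/-- Complete elliptic integral of the first kind. -/
noncomputable def EK (r : ℝ) : ℝ :=
  ∫ t in (0:ℝ)..(π/2), 1 / Real.sqrt (1 - r^2 * Real.sin t ^ 2)

/-- Complete elliptic integral of the second kind. -/
noncomputable def EE (r : ℝ) : ℝ :=
  ∫ t in (0:ℝ)..(π/2), Real.sqrt (1 - r^2 * Real.sin t ^ 2)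

/-- K'(r) = K(√(1-r²)). -/
noncomputable def EK' (r : ℝ) : ℝ := EK (Real.sqrt (1 - r^2))

/-- E'(r) = E(√(1-r²)). -/
noncomputable def EE' (r : ℝ) : ℝ := EE (Real.sqrt (1 - r^2))

/-- The function ψ. -/
noncomputable def psi (r : ℝ) : ℝ :=
  2 * (EE r - (1 - r) * EK r) / (EE' r - r * EK' r)

/-!
Gauss' substitution `sin φ = (1 + m) sin θ / (1 + m sin² θ)` yields the ascending Landen
transformation: with `k₁ = 2√m / (1 + m)`,
`K(k₁) = (1 + m) K(m)` and `(1 + m) E(k₁) = 2 E(m) - (1 - m²) K(m)`.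
Writing `D(k) = E(k) - (1 - k²) K(k)`, the Landen transformation at `m` and at
`(1 - m) / (1 + m)` turns the numerator and the denominator of `ψ(m)` into `(1 + m) D(k₁)` and
`(1 + m) D((1 - m) / (1 + m))`. Hence `ψ(r²) = D(k) / D(k')` with `k = 2r / (1 + r²)` and
`k' = (1 - r²) / (1 + r²)`; replacing `r` by `(1 - r) / (1 + r)` swaps `k` and `k'`, and
`D(k) = k² ∫ cos² t / Δ(k, t) dt` is positive.
-/

noncomputable def ellipticDelta (k t : ℝ) : ℝ := √(1 - k ^ 2 * sin t ^ 2)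

lemma EK_eq_integral (k : ℝ) : EK k = ∫ t in (0)..(π / 2), 1 / ellipticDelta k t := rfl

lemma EE_eq_integral (k : ℝ) : EE k = ∫ t in (0)..(π / 2), ellipticDelta k t := rfl

section ellipticDelta

variable {k : ℝ}

lemma one_sub_sq_mul_sin_sq_pos (hk : k ^ 2 < 1) (t : ℝ) : 0 < 1 - k ^ 2 * sin t ^ 2 := by
  nlinarith [sin_sq_le_one t, sq_nonneg (sin t)]

lemma ellipticDelta_pos (hk : k ^ 2 < 1) (t : ℝ) : 0 < ellipticDelta k t :=
  sqrt_pos.2 (one_sub_sq_mul_sin_sq_pos hk t)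

lemma ellipticDelta_sq (hk : k ^ 2 < 1) (t : ℝ) :
    ellipticDelta k t ^ 2 = 1 - k ^ 2 * sin t ^ 2 :=
  sq_sqrt (one_sub_sq_mul_sin_sq_pos hk t).le

lemma continuous_ellipticDelta (k : ℝ) : Continuous (ellipticDelta k) := by
  unfold ellipticDelta; fun_prop

lemma continuous_one_div_ellipticDelta (hk : k ^ 2 < 1) :
    Continuous fun t => 1 / ellipticDelta k t :=
  continuous_const.div (continuous_ellipticDelta k) fun t => (ellipticDelta_pos hk t).ne'

end ellipticDelta

noncomputable def landenAngle (m θ : ℝ) : ℝ :=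
  arcsin ((1 + m) * sin θ / (1 + m * sin θ ^ 2))

noncomputable def landenAngleDeriv (m θ : ℝ) : ℝ :=
  (1 + m) * (1 - m * sin θ ^ 2) / ((1 + m * sin θ ^ 2) * ellipticDelta m θ)

section landenAngle

variable {m : ℝ}

lemma sin_landenAngle (hm0 : 0 ≤ m) (hm1 : m ≤ 1) (θ : ℝ) :
    sin (landenAngle m θ) = (1 + m) * sin θ / (1 + m * sin θ ^ 2) := by
  have hv : 0 < 1 + m * sin θ ^ 2 := by positivity
  have := neg_one_le_sin θ
  have := sin_le_one θ
  apply sin_arcsin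
  · rw [le_div_iff₀ hv]
    nlinarith [mul_nonneg (by linarith : 0 ≤ 1 + sin θ) (by nlinarith : 0 ≤ 1 + m * sin θ)]
  · rw [div_le_one hv]
    nlinarith [mul_nonneg (by linarith : 0 ≤ 1 - sin θ) (by nlinarith : 0 ≤ 1 - m * sin θ)]

lemma landenAngle_zero (m : ℝ) : landenAngle m 0 = 0 := by simp [landenAngle]

lemma landenAngle_pi_div_two (hm : 0 ≤ m) : landenAngle m (π / 2) = π / 2 := by
  have : 1 + m ≠ 0 := by positivity
  simp [landenAngle, div_self this]

lemma continuous_landenAngle (hm : 0 ≤ m) : Continuous (landenAngle m) :=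
  continuous_arcsin.comp <| by
    refine Continuous.div (by fun_prop) (by fun_prop) fun θ => ?_
    exact (by positivity : 0 < 1 + m * sin θ ^ 2).ne'

lemma continuous_landenAngleDeriv (hm0 : 0 ≤ m) (hm1 : m < 1) :
    Continuous (landenAngleDeriv m) := by
  have hm2 : m ^ 2 < 1 := by nlinarith
  refine Continuous.div (by fun_prop) ((by fun_prop : Continuous fun θ => 1 + m * sin θ ^ 2).mul
    (continuous_ellipticDelta m)) fun θ => ?_
  exact (mul_pos (by positivity : 0 < 1 + m * sin θ ^ 2) (ellipticDelta_pos hm2 θ)).ne'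

lemma one_sub_sq_landen_sin (hm0 : 0 ≤ m) (hm1 : m < 1) (θ : ℝ) :
    1 - ((1 + m) * sin θ / (1 + m * sin θ ^ 2)) ^ 2
      = (cos θ * ellipticDelta m θ / (1 + m * sin θ ^ 2)) ^ 2 := by
  have hv : 0 < 1 + m * sin θ ^ 2 := by positivity
  rw [div_pow, div_pow, mul_pow, mul_pow, ellipticDelta_sq (by nlinarith), cos_sq']
  field_simp
  ring

lemma hasDerivAt_landenAngle (hm0 : 0 ≤ m) (hm1 : m < 1) {θ : ℝ} (hθ : 0 < cos θ) :
    HasDerivAt (landenAngle m) (landenAngleDeriv m θ) θ := by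
  have hv : 0 < 1 + m * sin θ ^ 2 := by positivity
  have hd := ellipticDelta_pos (by nlinarith : m ^ 2 < 1) θ
  set x := (1 + m) * sin θ / (1 + m * sin θ ^ 2)
  have hx : √(1 - x ^ 2) = cos θ * ellipticDelta m θ / (1 + m * sin θ ^ 2) := by
    rw [one_sub_sq_landen_sin hm0 hm1, sqrt_sq (by positivity)]
  have hx1 : 0 < 1 - x ^ 2 := by rw [one_sub_sq_landen_sin hm0 hm1]; positivity
  have hsin : HasDerivAt (fun t => (1 + m) * sin t / (1 + m * sin t ^ 2))
      (((1 + m) * cos θ * (1 + m * sin θ ^ 2) - (1 + m) * sin θ * (m * (2 * sin θ * cos θ)))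
        / (1 + m * sin θ ^ 2) ^ 2) θ := by
    have h2 : HasDerivAt (fun t => 1 + m * sin t ^ 2) (m * (2 * sin θ * cos θ)) θ := by
      simpa using (((hasDerivAt_sin θ).pow 2).const_mul m).const_add 1
    exact ((hasDerivAt_sin θ).const_mul (1 + m)).div h2 hv.ne'
  refine ((hasDerivAt_arcsin (by nlinarith) (by nlinarith)).comp θ hsin).congr_deriv ?_
  rw [hx, landenAngleDeriv]
  field_simp
  ring

lemma ellipticDelta_landenAngle (hm0 : 0 ≤ m) (hm1 : m < 1) (θ : ℝ) :
    ellipticDelta (2 * √m / (1 + m)) (landenAngle m θ)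
      = (1 - m * sin θ ^ 2) / (1 + m * sin θ ^ 2) := by
  have hv : 0 < 1 + m * sin θ ^ 2 := by positivity
  have h1 : 0 ≤ 1 - m * sin θ ^ 2 := by nlinarith [sin_sq_le_one θ]
  have : 1 - (2 * √m / (1 + m)) ^ 2 * sin (landenAngle m θ) ^ 2
      = ((1 - m * sin θ ^ 2) / (1 + m * sin θ ^ 2)) ^ 2 := by
    rw [sin_landenAngle hm0 hm1.le, div_pow, mul_pow, sq_sqrt hm0]
    field_simp
    ring
  rw [ellipticDelta, this, sqrt_sq (by positivity)]

theorem integral_comp_landenAngle (hm0 : 0 ≤ m) (hm1 : m < 1) {f : ℝ → ℝ} (hf : Continuous f) :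
    ∫ t in (0)..(π / 2), f t
      = ∫ θ in (0)..(π / 2), f (landenAngle m θ) * landenAngleDeriv m θ := by
  have hpi : 0 ≤ π / 2 := by positivity
  have h := intervalIntegral.integral_comp_mul_deriv'' (a := 0) (b := π / 2)
    (f := landenAngle m) (g := f)
    (continuous_landenAngle hm0).continuousOn (fun θ hθ => ?_)
    (continuous_landenAngleDeriv hm0 hm1).continuousOn hf.continuousOn
  · rw [landenAngle_zero, landenAngle_pi_div_two hm0] at h
    exact h.symm
  · rw [min_eq_left hpi, max_eq_right hpi] at hθ
    refine (hasDerivAt_landenAngle hm0 hm1 (cos_pos_of_mem_Ioo ⟨?_, hθ.2⟩)).hasDerivWithinAt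
    linarith [hθ.1, pi_pos]

end landenAngle

section landen

variable {m : ℝ}

lemma sq_landen_modulus_lt_one (hm0 : 0 ≤ m) (hm1 : m < 1) : (2 * √m / (1 + m)) ^ 2 < 1 := by
  rw [div_pow, mul_pow, sq_sqrt hm0, div_lt_one (by positivity)]
  nlinarith

theorem EK_landen (hm0 : 0 ≤ m) (hm1 : m < 1) : EK (2 * √m / (1 + m)) = (1 + m) * EK m := by
  rw [EK_eq_integral, integral_comp_landenAngle hm0 hm1
    (continuous_one_div_ellipticDelta (sq_landen_modulus_lt_one hm0 hm1)),
    EK_eq_integral, ← intervalIntegral.integral_const_mul]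
  refine intervalIntegral.integral_congr fun θ _ => ?_
  have hv : 0 < 1 + m * sin θ ^ 2 := by positivity
  have hd := ellipticDelta_pos (by nlinarith : m ^ 2 < 1) θ
  have h1 : 0 < 1 - m * sin θ ^ 2 := by nlinarith [sin_sq_le_one θ]
  simp only [ellipticDelta_landenAngle hm0 hm1, landenAngleDeriv]
  field_simp

noncomputable def landenRemainder (m θ : ℝ) : ℝ :=
  sin θ * cos θ * ellipticDelta m θ / (1 + m * sin θ ^ 2)

noncomputable def landenRemainderDeriv (m θ : ℝ) : ℝ :=
  (((cos θ ^ 2 - sin θ ^ 2) * (1 - m ^ 2 * sin θ ^ 2) - m ^ 2 * sin θ ^ 2 * cos θ ^ 2)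
      * (1 + m * sin θ ^ 2) - 2 * m * sin θ ^ 2 * cos θ ^ 2 * (1 - m ^ 2 * sin θ ^ 2))
    / ((1 + m * sin θ ^ 2) ^ 2 * ellipticDelta m θ)

lemma hasDerivAt_landenRemainder (hm0 : 0 ≤ m) (hm1 : m < 1) (θ : ℝ) :
    HasDerivAt (landenRemainder m) (landenRemainderDeriv m θ) θ := by
  have hm2 : m ^ 2 < 1 := by nlinarith
  have hv : 0 < 1 + m * sin θ ^ 2 := by positivity
  have hd := ellipticDelta_pos hm2 θ
  have hd2 := ellipticDelta_sq hm2 θ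
  have hΔ : HasDerivAt (ellipticDelta m)
      (-(m ^ 2 * (2 * sin θ * cos θ)) / (2 * ellipticDelta m θ)) θ := by
    have h := (((hasDerivAt_sin θ).pow 2).const_mul (m ^ 2)).const_sub 1
    simp only [Nat.cast_ofNat, Nat.add_one_sub_one, pow_one] at h
    exact h.sqrt (one_sub_sq_mul_sin_sq_pos hm2 θ).ne'
  have hv' : HasDerivAt (fun t => 1 + m * sin t ^ 2) (m * (2 * sin θ * cos θ)) θ := by
    simpa using (((hasDerivAt_sin θ).pow 2).const_mul m).const_add 1
  refine ((((hasDerivAt_sin θ).mul (hasDerivAt_cos θ)).mul hΔ).div hv' hv.ne').congr_deriv ?_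
  simp only [landenRemainderDeriv, Pi.mul_apply]
  field_simp
  rw [hd2]
  ring

lemma continuous_landenRemainderDeriv (hm0 : 0 ≤ m) (hm1 : m < 1) :
    Continuous (landenRemainderDeriv m) := by
  refine Continuous.div (by fun_prop) (by have := continuous_ellipticDelta m; fun_prop)
    fun θ => ?_
  exact (mul_pos (pow_pos (by positivity : 0 < 1 + m * sin θ ^ 2) 2)
    (ellipticDelta_pos (by nlinarith) θ)).ne'

lemma landen_integrand_E (hm0 : 0 ≤ m) (hm1 : m < 1) (θ : ℝ) :
    ellipticDelta (2 * √m / (1 + m)) (landenAngle m θ) * landenAngleDeriv m θ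
      = 2 / (1 + m) * ellipticDelta m θ - (1 - m ^ 2) / (1 + m) * (1 / ellipticDelta m θ)
        + 2 * m / (1 + m) * landenRemainderDeriv m θ := by
  have hm2 : m ^ 2 < 1 := by nlinarith
  have hv : 0 < 1 + m * sin θ ^ 2 := by positivity
  have hd := ellipticDelta_pos hm2 θ
  have hd2 := ellipticDelta_sq hm2 θ
  rw [ellipticDelta_landenAngle hm0 hm1, landenAngleDeriv, landenRemainderDeriv]
  field_simp
  rw [hd2, cos_sq']
  ring

theorem EE_landen (hm0 : 0 ≤ m) (hm1 : m < 1) :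
    (1 + m) * EE (2 * √m / (1 + m)) = 2 * EE m - (1 - m ^ 2) * EK m := by
  have hm2 : m ^ 2 < 1 := by nlinarith
  have hΔ := (continuous_ellipticDelta m).intervalIntegrable (μ := MeasureTheory.volume) 0 (π / 2)
  have hΔ' := (continuous_one_div_ellipticDelta hm2).intervalIntegrable
    (μ := MeasureTheory.volume) 0 (π / 2)
  have hR := (continuous_landenRemainderDeriv hm0 hm1).intervalIntegrable
    (μ := MeasureTheory.volume) 0 (π / 2)
  have hFTC : ∫ θ in (0)..(π / 2), landenRemainderDeriv m θ = 0 := by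
    rw [intervalIntegral.integral_eq_sub_of_hasDerivAt
      (fun θ _ => hasDerivAt_landenRemainder hm0 hm1 θ) hR]
    simp [landenRemainder]
  rw [EE_eq_integral, integral_comp_landenAngle hm0 hm1 (continuous_ellipticDelta _)]
  simp only [landen_integrand_E hm0 hm1]
  rw [intervalIntegral.integral_add ((hΔ.const_mul _).sub (hΔ'.const_mul _)) (hR.const_mul _),
    intervalIntegral.integral_sub (hΔ.const_mul _) (hΔ'.const_mul _),
    intervalIntegral.integral_const_mul, intervalIntegral.integral_const_mul,
    intervalIntegral.integral_const_mul, hFTC, ← EE_eq_integral, ← EK_eq_integral]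
  field_simp
  ring

end landen

noncomputable def ellipticDiff (k : ℝ) : ℝ := EE k - (1 - k ^ 2) * EK k

lemma ellipticDiff_eq_integral {k : ℝ} (hk : k ^ 2 < 1) :
    ellipticDiff k = ∫ t in (0)..(π / 2), k ^ 2 * cos t ^ 2 / ellipticDelta k t := by
  have hΔ := (continuous_ellipticDelta k).intervalIntegrable (μ := MeasureTheory.volume) 0 (π / 2)
  have hΔ' := (continuous_one_div_ellipticDelta hk).intervalIntegrable
    (μ := MeasureTheory.volume) 0 (π / 2)
  rw [ellipticDiff, EE_eq_integral, EK_eq_integral, ← intervalIntegral.integral_const_mul,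
    ← intervalIntegral.integral_sub hΔ (hΔ'.const_mul _)]
  refine intervalIntegral.integral_congr fun t _ => ?_
  have hd := ellipticDelta_pos hk t
  field_simp
  rw [ellipticDelta_sq hk, cos_sq']
  ring

lemma ellipticDiff_pos {k : ℝ} (hk0 : k ≠ 0) (hk : k ^ 2 < 1) : 0 < ellipticDiff k := by
  rw [ellipticDiff_eq_integral hk]
  refine intervalIntegral.intervalIntegral_pos_of_pos_on ?_ (fun t ht => ?_) (by positivity)
  · exact (Continuous.div (by fun_prop) (continuous_ellipticDelta k)
      fun t => (ellipticDelta_pos hk t).ne').intervalIntegrable _ _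
  · have := cos_pos_of_mem_Ioo ⟨by linarith [ht.1, pi_pos], ht.2⟩
    have := ellipticDelta_pos hk t
    positivity

section psi

variable {m : ℝ}

lemma two_mul_EE_sub_mul_EK (hm0 : 0 ≤ m) (hm1 : m < 1) :
    2 * (EE m - (1 - m) * EK m) = (1 + m) * ellipticDiff (2 * √m / (1 + m)) := by
  have : (1 : ℝ) + m ≠ 0 := by positivity
  rw [ellipticDiff, mul_sub (1 + m), EE_landen hm0 hm1, EK_landen hm0 hm1, div_pow, mul_pow,
    sq_sqrt hm0]
  field_simp
  ring

lemma EE'_sub_mul_EK' (hm0 : 0 < m) (hm1 : m ≤ 1) :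
    EE' m - m * EK' m = (1 + m) * ellipticDiff ((1 - m) / (1 + m)) := by
  set μ := (1 - m) / (1 + m) with hμ
  have hμ0 : 0 ≤ μ := div_nonneg (by linarith) (by linarith)
  have hμ1 : μ < 1 := (div_lt_one (by linarith)).2 (by linarith)
  have hμm : 1 + μ = 2 / (1 + m) := by rw [hμ]; field_simp; ring
  have hmodulus : √(1 - m ^ 2) = 2 * √μ / (1 + μ) := by
    rw [show 1 - m ^ 2 = (2 * √μ / (1 + μ)) ^ 2 by
      rw [div_pow, mul_pow, sq_sqrt hμ0, hμm, hμ]; field_simp; ring]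
    exact sqrt_sq (by positivity)
  have hE : EE (2 * √μ / (1 + μ)) = (2 * EE μ - (1 - μ ^ 2) * EK μ) / (1 + μ) :=
    eq_div_of_mul_eq (by positivity) (by rw [mul_comm]; exact EE_landen hμ0 hμ1)
  rw [EE', EK', hmodulus, EK_landen hμ0 hμ1, hE, ellipticDiff, hμm, hμ]
  field_simp
  ring

theorem psi_eq_ellipticDiff_div (hm0 : 0 < m) (hm1 : m < 1) :
    psi m = ellipticDiff (2 * √m / (1 + m)) / ellipticDiff ((1 - m) / (1 + m)) := by
  rw [psi, two_mul_EE_sub_mul_EK hm0.le hm1, EE'_sub_mul_EK' hm0 hm1.le,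
    mul_div_mul_left _ _ (by positivity)]

end psi

theorem psi_sq_eq_ellipticDiff_div {r : ℝ} (hr0 : 0 < r) (hr1 : r < 1) :
    psi (r ^ 2)
      = ellipticDiff (2 * r / (1 + r ^ 2)) / ellipticDiff ((1 - r ^ 2) / (1 + r ^ 2)) := by
  rw [psi_eq_ellipticDiff_div (by positivity) (by nlinarith), sqrt_sq hr0.le]

theorem psi_identity_sq (r : ℝ) (hr : r ∈ Ioo (0:ℝ) 1) :
    psi (r^2) * psi (((1 - r) / (1 + r))^2) = 1 := by
  obtain ⟨hr0, hr1⟩ := hr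
  set s := (1 - r) / (1 + r) with hs
  have hs0 : 0 < s := div_pos (by linarith) (by linarith)
  have hs1 : s < 1 := (div_lt_one (by linarith)).2 (by linarith)
  have hsk : 2 * s / (1 + s ^ 2) = (1 - r ^ 2) / (1 + r ^ 2) := by rw [hs]; field_simp; ring
  have hsk' : (1 - s ^ 2) / (1 + s ^ 2) = 2 * r / (1 + r ^ 2) := by rw [hs]; field_simp; ring
  rw [psi_sq_eq_ellipticDiff_div hr0 hr1, psi_sq_eq_ellipticDiff_div hs0 hs1, hsk, hsk']
  have hD : 0 < ellipticDiff (2 * r / (1 + r ^ 2)) := ellipticDiff_pos (by positivity)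
    (by rw [div_pow, div_lt_one (by positivity)]; nlinarith [mul_pos (sub_pos.2 hr1) hr0])
  have hD' : 0 < ellipticDiff ((1 - r ^ 2) / (1 + r ^ 2)) :=
    ellipticDiff_pos (div_ne_zero (by nlinarith) (by positivity))
      (by rw [div_pow, div_lt_one (by positivity)]; nlinarith)
  field_simp
end

section
/- The function f₂(r) = (E(r) − (1−r)K(r))/r is strictly decreasing on (0,1), with f₂(r)→π/2 as r→0+ and f₂(r)→1 as r→1−; moreover the function f₁(r) = E(r) − (1−r)K(r) is strictly increasing and concave on (0,1), with f₁(r)→0 as r→0+ and f₁(r)→1 as r→1−. -/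
open Real Set Filter Topology

/-!
Write `Δ = √(1 - r² sin² t)` and `s = sin² t`. Pointwise, `Δ - (1 - r)/Δ = r (1 - r s)/Δ`, so
`f₂(r) = ∫₀^{π/2} (1 - r s)/Δ dt`. The integrand lies in `[0, 1]`, is strictly decreasing in `r`
(for `s > 0`), equals `1` at `r = 0` and `cos t` at `r = 1`; this gives the monotonicity of `f₂`
and, by dominated convergence, the limits of `f₂` and of `f₁ = r f₂`.

Differentiating `f₁(r) = ∫ r (1 - r s)/Δ` under the integral sign gives the integrand
`(1 - 2 r s + r³ s²)/Δ³ = Δ/(1 + r) + r/(1 + r) · d/dt (sin t cos t / Δ)`, and the last term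
integrates to zero. Hence `f₁' = E/(1 + r)`, which is positive and, as `E` decreases, decreasing.
-/

open MeasureTheory intervalIntegral
open scoped Interval

theorem hasDerivAt_intervalIntegral_of_continuousOn {E : Type*} [NormedAddCommGroup E]
    [NormedSpace ℝ E] {F F' : ℝ → ℝ → E} {U : Set ℝ} {x₀ a b : ℝ}
    (hU : IsOpen U) (hx₀ : x₀ ∈ U) (hF : ∀ x ∈ U, ContinuousOn (F x) [[a, b]])
    (hF' : ContinuousOn (Function.uncurry F') (U ×ˢ [[a, b]]))
    (hdiff : ∀ x ∈ U, ∀ t ∈ [[a, b]], HasDerivAt (F · t) (F' x t) x) :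
    HasDerivAt (fun x => ∫ t in a..b, F x t) (∫ t in a..b, F' x₀ t) x₀ := by
  obtain ⟨ε, hε, hεU⟩ := Metric.nhds_basis_closedBall.mem_iff.1 (hU.mem_nhds hx₀)
  obtain ⟨C, hC⟩ := ((isCompact_closedBall x₀ ε).prod isCompact_uIcc).exists_bound_of_continuousOn
    (hF'.mono (prod_mono hεU subset_rfl))
  have hball : Metric.ball x₀ ε ⊆ U := Metric.ball_subset_closedBall.trans hεU
  refine (hasDerivAt_integral_of_dominated_loc_of_deriv_le (bound := fun _ => C)
    (Metric.ball_mem_nhds x₀ hε) ?_ (hF x₀ hx₀).intervalIntegrable ?_ ?_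
    intervalIntegrable_const ?_).2
  · filter_upwards [hU.mem_nhds hx₀] with x hx
    exact ((hF x hx).mono uIoc_subset_uIcc).aestronglyMeasurable measurableSet_uIoc
  · refine ContinuousOn.aestronglyMeasurable ?_ measurableSet_uIoc
    exact (hF'.comp (Continuous.prodMk_right x₀).continuousOn
      fun t ht => ⟨hx₀, uIoc_subset_uIcc ht⟩)
  · exact ae_of_all _ fun t ht x hx =>
      hC (x, t) ⟨Metric.ball_subset_closedBall hx, uIoc_subset_uIcc ht⟩
  · exact ae_of_all _ fun t ht x hx => hdiff x (hball hx) t (uIoc_subset_uIcc ht)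

noncomputable def f₁ (r : ℝ) : ℝ := EE r - (1 - r) * EK r

noncomputable def f₂ (r : ℝ) : ℝ := f₁ r / r

noncomputable def f₂Integrand (r u : ℝ) : ℝ := (1 - r * u) / √(1 - r ^ 2 * u)

section Pointwise

variable {r u : ℝ}

lemma f₂Integrand_zero_left (u : ℝ) : f₂Integrand 0 u = 1 := by
  simp [f₂Integrand]

lemma f₂Integrand_zero_right (r : ℝ) : f₂Integrand r 0 = 1 := by
  simp [f₂Integrand]

lemma f₂Integrand_one_left (u : ℝ) : f₂Integrand 1 u = √(1 - u) := by
  simp [f₂Integrand, div_sqrt]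

lemma f₂Integrand_nonneg (hr : r ∈ Icc 0 1) (hu : u ∈ Icc 0 1) : 0 ≤ f₂Integrand r u := by
  have : r * u ≤ 1 := mul_le_one₀ hr.2 hu.1 hu.2
  unfold f₂Integrand
  positivity

lemma f₂Integrand_le_one (hr : r ∈ Icc 0 1) (hu : u ∈ Icc 0 1) : f₂Integrand r u ≤ 1 := by
  obtain ⟨hr0, hr1⟩ := hr
  obtain ⟨hu0, hu1⟩ := hu
  have hru : r * u ≤ 1 := mul_le_one₀ hr1 hu0 hu1
  refine div_le_one_of_le₀ ((Real.le_sqrt (by linarith) (by nlinarith)).2 ?_) (sqrt_nonneg _)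
  nlinarith [mul_nonneg (mul_nonneg hr0 hu0) (show 0 ≤ 2 - r - r * u by linarith)]

lemma f₂Integrand_strictAntiOn (hu : u ∈ Ioc 0 1) :
    StrictAntiOn (f₂Integrand · u) (Ico 0 1) := by
  intro a ha b hb hab
  obtain ⟨hu0, hu1⟩ := hu
  have hXa : 0 < 1 - a ^ 2 * u := by nlinarith [ha.1, ha.2]
  have hXb : 0 < 1 - b ^ 2 * u := by nlinarith [hb.1, hb.2]
  refine lt_of_pow_lt_pow_left₀ 2 (f₂Integrand_nonneg ⟨ha.1, ha.2.le⟩ ⟨hu0.le, hu1⟩) ?_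
  simp only [f₂Integrand, div_pow, sq_sqrt hXa.le, sq_sqrt hXb.le]
  have key : (1 - a * u) ^ 2 * (1 - b ^ 2 * u) - (1 - b * u) ^ 2 * (1 - a ^ 2 * u)
      = u * (b - a) * (2 * (1 - a) * (1 - b) + (1 - u) * (a * (1 - b) + b * (1 - a))) := by
    ring
  rw [div_lt_div_iff₀ hXb hXa, ← sub_pos, key]
  have ha1 : 0 < 1 - a := by linarith [ha.2]
  have hb1 : 0 < 1 - b := by linarith [hb.2]
  have hb0 : 0 ≤ b := ha.1.trans hab.le
  have hu1' : 0 ≤ 1 - u := by linarith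
  refine mul_pos (mul_pos hu0 (sub_pos.2 hab)) ?_
  nlinarith [mul_pos ha1 hb1,
    mul_nonneg hu1' (add_nonneg (mul_nonneg ha.1 hb1.le) (mul_nonneg hb0 ha1.le))]

lemma f₂Integrand_antitoneOn (hu : u ∈ Icc 0 1) :
    AntitoneOn (f₂Integrand · u) (Ico 0 1) := by
  rcases hu.1.eq_or_lt with rfl | hu0
  · intro a _ b _ _
    simp only [f₂Integrand_zero_right, le_refl]
  · exact (f₂Integrand_strictAntiOn ⟨hu0, hu.2⟩).antitoneOn

lemma continuousAt_f₂Integrand_left (h : r ^ 2 * u < 1) :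
    ContinuousAt (f₂Integrand · u) r :=
  (continuousAt_const.sub (continuousAt_id.mul continuousAt_const)).div
    (by fun_prop) (sqrt_pos.2 (by linarith)).ne'

lemma mul_f₂Integrand (h : r ^ 2 * u < 1) :
    r * f₂Integrand r u = √(1 - r ^ 2 * u) - (1 - r) * (1 / √(1 - r ^ 2 * u)) := by
  have hX : 0 < 1 - r ^ 2 * u := by linarith
  have hS := sqrt_pos.2 hX
  rw [f₂Integrand]
  field_simp
  rw [sq_sqrt hX.le]
  ring

lemma hasDerivAt_mul_f₂Integrand (h : r ^ 2 * u < 1) :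
    HasDerivAt (fun x => x * f₂Integrand x u)
      ((1 - 2 * r * u + r ^ 3 * u ^ 2) / √(1 - r ^ 2 * u) ^ 3) r := by
  have hX : 0 < 1 - r ^ 2 * u := by linarith
  have hS := sqrt_pos.2 hX
  have hnum : HasDerivAt (fun x => x * (1 - x * u)) (1 * (1 - r * u) + r * -(1 * u)) r :=
    (hasDerivAt_id r).mul (((hasDerivAt_id r).mul_const u).const_sub 1)
  have hden : HasDerivAt (fun x => √(1 - x ^ 2 * u))
      (-(↑2 * r ^ (2 - 1) * u) / (2 * √(1 - r ^ 2 * u))) r :=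
    (((hasDerivAt_pow 2 r).mul_const u).const_sub 1).sqrt hX.ne'
  have hfun : (fun x => x * f₂Integrand x u) = fun x => x * (1 - x * u) / √(1 - x ^ 2 * u) :=
    funext fun x => (mul_div_assoc ..).symm
  rw [hfun]
  refine (hnum.div hden hS.ne').congr_deriv ?_
  field_simp
  rw [sq_sqrt hX.le]
  ring

lemma f₁_deriv_integrand_split (h : r ^ 2 * u < 1) (hr : 1 + r ≠ 0) :
    (1 - 2 * r * u + r ^ 3 * u ^ 2) / √(1 - r ^ 2 * u) ^ 3
      = √(1 - r ^ 2 * u) / (1 + r)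
        + r / (1 + r) * ((1 - 2 * u + r ^ 2 * u ^ 2) / √(1 - r ^ 2 * u) ^ 3) := by
  have hX : 0 < 1 - r ^ 2 * u := by linarith
  have hS := sqrt_pos.2 hX
  field_simp
  rw [show √(1 - r ^ 2 * u) ^ 4 = (√(1 - r ^ 2 * u) ^ 2) ^ 2 by ring, sq_sqrt hX.le]
  ring

end Pointwise

section SinSq

variable {r : ℝ}

lemma sq_lt_one_of_mem_Ioo (hr : r ∈ Ioo (-1) 1) : r ^ 2 < 1 :=
  (sq_lt_one_iff_abs_lt_one r).2 (abs_lt.2 hr)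

lemma sq_mul_sin_sq_lt_one (hr : r ^ 2 < 1) (t : ℝ) : r ^ 2 * sin t ^ 2 < 1 :=
  (mul_le_of_le_one_right (sq_nonneg r) (sin_sq_le_one t)).trans_lt hr

lemma sqrt_one_sub_sq_mul_sin_sq_pos (hr : r ^ 2 < 1) (t : ℝ) : 0 < √(1 - r ^ 2 * sin t ^ 2) :=
  sqrt_pos.2 (sub_pos.2 (sq_mul_sin_sq_lt_one hr t))

lemma continuous_f₂Integrand_sin_sq (hr : r ^ 2 < 1) :
    Continuous fun t => f₂Integrand r (sin t ^ 2) :=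
  Continuous.div (by fun_prop) (by fun_prop) fun t => (sqrt_one_sub_sq_mul_sin_sq_pos hr t).ne'

lemma continuous_div_sqrt_one_sub_sq_mul_sin_sq_pow_three (hr : r ^ 2 < 1) {f : ℝ → ℝ}
    (hf : Continuous f) : Continuous fun t => f t / √(1 - r ^ 2 * sin t ^ 2) ^ 3 :=
  hf.div (by fun_prop) fun t => pow_ne_zero 3 (sqrt_one_sub_sq_mul_sin_sq_pos hr t).ne'

lemma hasDerivAt_sin_mul_cos_div_sqrt (hr : r ^ 2 < 1) (t : ℝ) :
    HasDerivAt (fun t => sin t * cos t / √(1 - r ^ 2 * sin t ^ 2))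
      ((1 - 2 * sin t ^ 2 + r ^ 2 * (sin t ^ 2) ^ 2) / √(1 - r ^ 2 * sin t ^ 2) ^ 3) t := by
  have hX := sub_pos.2 (sq_mul_sin_sq_lt_one hr t)
  have hS := sqrt_pos.2 hX
  have hden : HasDerivAt (fun t => √(1 - r ^ 2 * sin t ^ 2))
      (-(r ^ 2 * (↑2 * sin t ^ (2 - 1) * cos t)) / (2 * √(1 - r ^ 2 * sin t ^ 2))) t :=
    ((((hasDerivAt_sin t).pow 2).const_mul _).const_sub 1).sqrt hX.ne'
  refine (((hasDerivAt_sin t).mul (hasDerivAt_cos t)).div hden hS.ne').congr_deriv ?_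
  have hS2 := sq_sqrt hX.le
  generalize √(1 - r ^ 2 * sin t ^ 2) = S at hS hS2 ⊢
  simp only [Pi.mul_apply]
  field_simp
  linear_combination (cos t ^ 2 - sin t ^ 2) * hS2 + cos_sq' t

lemma integral_sin_mul_cos_div_sqrt_deriv (hr : r ^ 2 < 1) :
    ∫ t in (0)..(π / 2),
      (1 - 2 * sin t ^ 2 + r ^ 2 * (sin t ^ 2) ^ 2) / √(1 - r ^ 2 * sin t ^ 2) ^ 3 = 0 := by
  rw [integral_eq_sub_of_hasDerivAt (fun t _ => hasDerivAt_sin_mul_cos_div_sqrt hr t)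
    ((continuous_div_sqrt_one_sub_sq_mul_sin_sq_pow_three hr (by fun_prop)).intervalIntegrable _ _)]
  simp

lemma f₁_eq_mul_integral (hr : r ^ 2 < 1) :
    f₁ r = r * ∫ t in (0)..(π / 2), f₂Integrand r (sin t ^ 2) := by
  have hS : Continuous fun t => √(1 - r ^ 2 * sin t ^ 2) := by fun_prop
  have hK : Continuous fun t => 1 / √(1 - r ^ 2 * sin t ^ 2) :=
    continuous_const.div hS fun t => (sqrt_one_sub_sq_mul_sin_sq_pos hr t).ne'
  rw [f₁, EE, EK, ← intervalIntegral.integral_const_mul, ← intervalIntegral.integral_const_mul,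
    ← integral_sub (hS.intervalIntegrable _ _) ((hK.const_mul _).intervalIntegrable _ _)]
  exact integral_congr fun t _ => (mul_f₂Integrand (sq_mul_sin_sq_lt_one hr t)).symm

lemma f₂_eq_integral (hr0 : r ≠ 0) (hr : r ^ 2 < 1) :
    f₂ r = ∫ t in (0)..(π / 2), f₂Integrand r (sin t ^ 2) := by
  rw [f₂, f₁_eq_mul_integral hr, mul_div_cancel_left₀ _ hr0]

lemma integral_f₁_deriv_integrand (hr : r ∈ Ioo (-1) 1) :
    ∫ t in (0)..(π / 2),
      (1 - 2 * r * sin t ^ 2 + r ^ 3 * (sin t ^ 2) ^ 2) / √(1 - r ^ 2 * sin t ^ 2) ^ 3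
      = EE r / (1 + r) := by
  have hr2 := sq_lt_one_of_mem_Ioo hr
  have h1r : 1 + r ≠ 0 := by linarith [hr.1]
  rw [integral_congr fun t _ => f₁_deriv_integrand_split (sq_mul_sin_sq_lt_one hr2 t) h1r,
    integral_add ((Continuous.div_const (by fun_prop) _).intervalIntegrable _ _)
      (((continuous_div_sqrt_one_sub_sq_mul_sin_sq_pow_three hr2 (by fun_prop)).const_mul _
        ).intervalIntegrable _ _),
    intervalIntegral.integral_div, intervalIntegral.integral_const_mul,
    integral_sin_mul_cos_div_sqrt_deriv hr2, mul_zero, add_zero, EE]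

lemma EE_pos (hr : r ^ 2 < 1) : 0 < EE r :=
  intervalIntegral_pos_of_pos (Continuous.intervalIntegrable (by fun_prop) _ _)
    (sqrt_one_sub_sq_mul_sin_sq_pos hr) (by positivity)

end SinSq

lemma EE_antitoneOn : AntitoneOn EE (Ici 0) := by
  intro a ha b hb hab
  refine integral_mono_on (by positivity) (Continuous.intervalIntegrable (by fun_prop) _ _)
    (Continuous.intervalIntegrable (by fun_prop) _ _) fun t _ => sqrt_le_sqrt ?_
  have : a ^ 2 ≤ b ^ 2 := pow_le_pow_left₀ ha hab 2
  nlinarith [sq_nonneg (sin t)]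

lemma strictAntiOn_f₂ : StrictAntiOn f₂ (Ioo 0 1) := by
  intro a ha b hb hab
  have ha2 := sq_lt_one_of_mem_Ioo ⟨by linarith [ha.1], ha.2⟩
  have hb2 := sq_lt_one_of_mem_Ioo ⟨by linarith [hb.1], hb.2⟩
  rw [f₂_eq_integral ha.1.ne' ha2, f₂_eq_integral hb.1.ne' hb2]
  refine integral_lt_integral_of_continuousOn_of_le_of_exists_lt (by positivity)
    (continuous_f₂Integrand_sin_sq hb2).continuousOn
    (continuous_f₂Integrand_sin_sq ha2).continuousOn
    (fun t _ => f₂Integrand_antitoneOn ⟨sq_nonneg _, sin_sq_le_one t⟩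
      ⟨ha.1.le, ha.2⟩ ⟨hb.1.le, hb.2⟩ hab.le) ⟨π / 2, right_mem_Icc.2 (by positivity), ?_⟩
  rw [sin_pi_div_two, one_pow]
  exact f₂Integrand_strictAntiOn ⟨one_pos, le_rfl⟩ ⟨ha.1.le, ha.2⟩ ⟨hb.1.le, hb.2⟩ hab

lemma tendsto_integral_f₂Integrand {l : Filter ℝ} [l.IsCountablyGenerated] {r₀ : ℝ}
    (hl : l ≤ 𝓝 r₀) (hr₀ : r₀ ^ 2 ≤ 1) (hl' : Ico 0 1 ∈ l) :
    Tendsto (fun r => ∫ t in (0)..(π / 2), f₂Integrand r (sin t ^ 2)) l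
      (𝓝 (∫ t in (0)..(π / 2), f₂Integrand r₀ (sin t ^ 2))) := by
  refine tendsto_integral_filter_of_dominated_convergence (fun _ => 1) ?_ ?_
    intervalIntegrable_const ?_
  · filter_upwards [hl'] with r hr
    exact (continuous_f₂Integrand_sin_sq (sq_lt_one_of_mem_Ioo ⟨by linarith [hr.1], hr.2⟩)
      ).aestronglyMeasurable
  · filter_upwards [hl'] with r hr
    refine ae_of_all _ fun t _ => ?_
    have hu : sin t ^ 2 ∈ Icc 0 1 := ⟨sq_nonneg _, sin_sq_le_one t⟩
    rw [Real.norm_of_nonneg (f₂Integrand_nonneg ⟨hr.1, hr.2.le⟩ hu)]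
    exact f₂Integrand_le_one ⟨hr.1, hr.2.le⟩ hu
  · filter_upwards [volume.ae_ne (π / 2)] with t ht htI
    rw [uIoc_of_le (by positivity)] at htI
    have hcos : 0 < cos t := cos_pos_of_mem_Ioo
      ⟨by linarith [htI.1, pi_pos], lt_of_le_of_ne htI.2 ht⟩
    have hsin : sin t ^ 2 < 1 := by nlinarith [sin_sq_add_cos_sq t]
    exact ((continuousAt_f₂Integrand_left (by nlinarith)).tendsto).mono_left hl

lemma integral_f₂Integrand_zero_left :
    ∫ t in (0)..(π / 2), f₂Integrand 0 (sin t ^ 2) = π / 2 := by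
  simp [f₂Integrand_zero_left]

lemma integral_f₂Integrand_one_left :
    ∫ t in (0)..(π / 2), f₂Integrand 1 (sin t ^ 2) = 1 := by
  simp_rw [f₂Integrand_one_left, ← cos_sq', sqrt_sq_eq_abs]
  rw [integral_congr (g := cos) fun t ht => abs_of_nonneg (cos_nonneg_of_mem_Icc ?_)]
  · simp
  · rw [uIcc_of_le (by positivity)] at ht
    exact ⟨by linarith [ht.1, pi_pos], ht.2⟩

section Limits

variable {l : Filter ℝ} [l.IsCountablyGenerated] {r₀ : ℝ}

lemma tendsto_f₂_of_le_nhds (hl : l ≤ 𝓝 r₀) (hr₀ : r₀ ^ 2 ≤ 1) (hl' : Ioo 0 1 ∈ l) :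
    Tendsto f₂ l (𝓝 (∫ t in (0)..(π / 2), f₂Integrand r₀ (sin t ^ 2))) := by
  refine (tendsto_integral_f₂Integrand hl hr₀ (mem_of_superset hl' Ioo_subset_Ico_self)).congr' ?_
  filter_upwards [hl'] with r hr
  exact (f₂_eq_integral hr.1.ne' (sq_lt_one_of_mem_Ioo ⟨by linarith [hr.1], hr.2⟩)).symm

lemma tendsto_f₁_of_le_nhds (hl : l ≤ 𝓝 r₀) (hr₀ : r₀ ^ 2 ≤ 1) (hl' : Ioo 0 1 ∈ l) :
    Tendsto f₁ l (𝓝 (r₀ * ∫ t in (0)..(π / 2), f₂Integrand r₀ (sin t ^ 2))) := by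
  refine ((tendsto_id.mono_left hl).mul
    (tendsto_integral_f₂Integrand hl hr₀ (mem_of_superset hl' Ioo_subset_Ico_self))).congr' ?_
  filter_upwards [hl'] with r hr
  exact (f₁_eq_mul_integral (sq_lt_one_of_mem_Ioo ⟨by linarith [hr.1], hr.2⟩)).symm

end Limits

lemma tendsto_f₂_nhdsGT_zero : Tendsto f₂ (𝓝[>] 0) (𝓝 (π / 2)) := by
  simpa only [integral_f₂Integrand_zero_left] using
    tendsto_f₂_of_le_nhds nhdsWithin_le_nhds (by norm_num) (Ioo_mem_nhdsGT one_pos)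

lemma tendsto_f₂_nhdsLT_one : Tendsto f₂ (𝓝[<] 1) (𝓝 1) := by
  simpa only [integral_f₂Integrand_one_left] using
    tendsto_f₂_of_le_nhds nhdsWithin_le_nhds (by norm_num) (Ioo_mem_nhdsLT one_pos)

lemma tendsto_f₁_nhdsGT_zero : Tendsto f₁ (𝓝[>] 0) (𝓝 0) := by
  simpa only [zero_mul] using
    tendsto_f₁_of_le_nhds nhdsWithin_le_nhds (by norm_num) (Ioo_mem_nhdsGT one_pos)

lemma tendsto_f₁_nhdsLT_one : Tendsto f₁ (𝓝[<] 1) (𝓝 1) := by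
  simpa only [integral_f₂Integrand_one_left, one_mul] using
    tendsto_f₁_of_le_nhds nhdsWithin_le_nhds (by norm_num) (Ioo_mem_nhdsLT one_pos)

lemma hasDerivAt_f₁ {r : ℝ} (hr : r ∈ Ioo (-1) 1) : HasDerivAt f₁ (EE r / (1 + r)) r := by
  have hF' : ContinuousOn (fun p : ℝ × ℝ =>
      (1 - 2 * p.1 * sin p.2 ^ 2 + p.1 ^ 3 * (sin p.2 ^ 2) ^ 2) / √(1 - p.1 ^ 2 * sin p.2 ^ 2) ^ 3)
      (Ioo (-1) 1 ×ˢ [[0, π / 2]]) :=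
    ContinuousOn.div (by fun_prop) (by fun_prop) fun p hp =>
      pow_ne_zero 3 (sqrt_one_sub_sq_mul_sin_sq_pos (sq_lt_one_of_mem_Ioo hp.1) p.2).ne'
  have hderiv := hasDerivAt_intervalIntegral_of_continuousOn
    (F := fun x t => x * f₂Integrand x (sin t ^ 2))
    (F' := fun x t => (1 - 2 * x * sin t ^ 2 + x ^ 3 * (sin t ^ 2) ^ 2)
      / √(1 - x ^ 2 * sin t ^ 2) ^ 3) isOpen_Ioo hr
    (fun x hx => ((continuous_f₂Integrand_sin_sq (sq_lt_one_of_mem_Ioo hx)).const_mul x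
      ).continuousOn) hF'
    (fun x hx t _ => hasDerivAt_mul_f₂Integrand (sq_mul_sin_sq_lt_one (sq_lt_one_of_mem_Ioo hx) t))
  rw [integral_f₁_deriv_integrand hr] at hderiv
  refine hderiv.congr_of_eventuallyEq ?_
  filter_upwards [isOpen_Ioo.mem_nhds hr] with x hx
  rw [f₁_eq_mul_integral (sq_lt_one_of_mem_Ioo hx), intervalIntegral.integral_const_mul]

lemma strictMonoOn_f₁ : StrictMonoOn f₁ (Ioo (-1) 1) := by
  refine strictMonoOn_of_hasDerivWithinAt_pos (convex_Ioo _ _)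
    (fun x hx => (hasDerivAt_f₁ hx).continuousAt.continuousWithinAt)
    (fun x hx => (hasDerivAt_f₁ (interior_subset hx)).hasDerivWithinAt) fun x hx => ?_
  rw [interior_Ioo] at hx
  exact div_pos (EE_pos (sq_lt_one_of_mem_Ioo hx)) (by linarith [hx.1])

lemma concaveOn_f₁ : ConcaveOn ℝ (Ico 0 1) f₁ := by
  have hmem : Ico (0 : ℝ) 1 ⊆ Ioo (-1) 1 := Ico_subset_Ioo_left (by norm_num)
  refine AntitoneOn.concaveOn_of_deriv (convex_Ico _ _)
    (fun x hx => (hasDerivAt_f₁ (hmem hx)).continuousAt.continuousWithinAt)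
    (fun x hx =>
      (hasDerivAt_f₁ (hmem (interior_subset hx))).differentiableAt.differentiableWithinAt)
    ?_
  rw [interior_Ico]
  intro x hx y hy hxy
  rw [(hasDerivAt_f₁ (hmem (Ioo_subset_Ico_self hx))).deriv,
    (hasDerivAt_f₁ (hmem (Ioo_subset_Ico_self hy))).deriv]
  exact div_le_div₀ (EE_pos (sq_lt_one_of_mem_Ioo (hmem (Ioo_subset_Ico_self hx)))).le
    (EE_antitoneOn hx.1.le hy.1.le hxy) (by linarith [hx.1]) (by linarith)

theorem f1_f2_properties :
    StrictAntiOn (fun r => (EE r - (1 - r) * EK r) / r) (Ioo (0:ℝ) 1) ∧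
    Tendsto (fun r => (EE r - (1 - r) * EK r) / r)
      (nhdsWithin 0 (Ioi (0:ℝ))) (nhds (π / 2)) ∧
    Tendsto (fun r => (EE r - (1 - r) * EK r) / r)
      (nhdsWithin 1 (Iio (1:ℝ))) (nhds 1) ∧
    StrictMonoOn (fun r => EE r - (1 - r) * EK r) (Ioo (0:ℝ) 1) ∧
    ConcaveOn ℝ (Ioo (0:ℝ) 1) (fun r => EE r - (1 - r) * EK r) ∧
    Tendsto (fun r => EE r - (1 - r) * EK r)
      (nhdsWithin 0 (Ioi (0:ℝ))) (nhds 0) ∧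
    Tendsto (fun r => EE r - (1 - r) * EK r)
      (nhdsWithin 1 (Iio (1:ℝ))) (nhds 1) :=
  ⟨strictAntiOn_f₂, tendsto_f₂_nhdsGT_zero, tendsto_f₂_nhdsLT_one,
    strictMonoOn_f₁.mono (Ioo_subset_Ioo_left (by norm_num)),
    concaveOn_f₁.subset Ioo_subset_Ico_self (convex_Ioo 0 1),
    tendsto_f₁_nhdsGT_zero, tendsto_f₁_nhdsLT_one⟩
end
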